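/- (Lossless linearization, Theorem 2.) Let Δt > 0, K a positive integer, parameters 0 < γ ≤ Γ and 0 < γ̂ ≤ Γ̂ with γ/Δt, Γ/Δt, γ̂/Δt, Γ̂/Δt positive integers and Γ/Δt ≤ K, Γ̂/Δt ≤ K, and η⁺, η⁻ ∈ (0,1]; write Δη = 1/η⁻ − η⁺. Fix 𝐝 ∈ ℝ^K, bounds y̲ ≤ ȳ, intervals Y₀ = [y̲₀, ȳ₀] and Ŷ₀ = [ŷ̲₀, ŷ̄₀], charger bounds ȳ⁺, ȳ⁻ ∈ ℝ₊^K, a target y* ∈ ℝ, a penalty p* ≥ 0, a feasible set X_K ⊆ ℝ₊^K × ℝ₊^K, and a linear cost c_K. Then the optimal value of the non-convex robust problem (R_K) — minimize over (𝐱^b,𝐱^r) ∈ X_K the quantity c_K(𝐱^b,𝐱^r) + max_{𝛅 ∈ D̂_K, y₀ ∈ Ŷ₀} p*·|y_K(𝐱^b,𝐱^r,𝛅,y₀) − y*| subject to [x^b_k+δ_k x^r_k]⁺ ≤ ȳ⁺_k and [x^b_k+δ_k x^r_k]⁻ ≤ ȳ⁻_k for all 𝛅 ∈ D_K, k ∈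 {1,…,K}, and y̲ ≤ y_k(𝐱^b,𝐱^r,𝛅,y₀) ≤ ȳ for all 𝛅 ∈ D_K, k ∈ {0,…,K}, y₀ ∈ Y₀ — equals the optimal value of the linear robust problem (R'_K): minimize over (𝐱^b,𝐱^r) ∈ X_K, 𝐦 ∈ ℝ^K, z ∈ ℝ the quantity c_K(𝐱^b,𝐱^r) + p*·z subject to x^r_k + x^b_k ≤ ȳ⁺_k and x^r_k − x^b_k ≤ ȳ⁻_k for all k; m_k ≥ η⁺ x^r_k and m_k ≥ (1/η⁻) x^r_k − Δη·x^b_k for all k; ȳ₀ + Δt Σ_{l=1}^{k}(η⁺(x^b_l + δ_l x^r_l) − d_l) ≤ ȳ for all 𝛅 ∈ D_K⁺ and k ∈ {0,…,K}; y̲₀ + Δt Σ_{l=1}^{k}(η⁺ x^b_l − m_l δ_l − d_l) ≥ y̲ for all 𝛅 ∈ D_K⁺ and k ∈ {0,…,K}; ŷ̄₀ − z + Δt Σ_{k=1}^{K}(η⁺(x^b_k + δ_k x^r_k) − d_k) ≤ y* for all 𝛅 ∈ D̂_K⁺; and ŷ̲₀ + z + Δt Σ_{k=1}^{K}(η⁺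 x^b_k − m_k δ_k − d_k) ≥ y* for all 𝛅 ∈ D̂_K⁺. -/

import Mathlib

/-!
Fix a nonnegative decision `(𝐱^b, 𝐱^r)`. A deviation `δ ≥ 0` only charges the battery, and
there the state of charge is linear with slope `η⁺`; replacing `δ` by `[δ]⁺ ∈ D⁺` therefore gives
the exact worst case from above. Discharging goes through the concave charge
`u ↦ min (η⁺ u) (u / η⁻)`, which is bounded below by `η⁺ x^b - m |δ|` for every `m` satisfying
the two linear constraints of (R'_K), with equality at `δ ∈ {0, -1}` for the least such `m`. The
worst discharge is thus a linear program over `D⁺`, maximised at an extreme point, and the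
extreme points of `D⁺` are `0/1` vectors: a fractional point can be moved in both directions
along a vector that shifts mass between the integer crossings of its prefix sums, without
changing the sum over any tight window. Hence a feasible point of (R_K), with `m` the least
admissible one and `z` the worst deviation from `y*`, is feasible for (R'_K) with the same cost,
and conversely the constraints of (R'_K) bound every state of charge of (R_K) from both sides.
-/

open MeasureTheory Set

noncomputable section

/-- The continuous-time uncertainty set `D` of measurable frequency-deviation
scenarios `δ : [0,T] → [-1,1]` whose total absolute deviation over every
backward window of length `Γ` is at most `γ`. -/
def Dset (T Γ γ : ℝ) : Set (ℝ → ℝ) :=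
  {δ | Measurable δ ∧ (∀ t ∈ Icc (0:ℝ) T, δ t ∈ Icc (-1:ℝ) 1) ∧
    ∀ t ∈ Icc (0:ℝ) T, (∫ s in (max (t - Γ) 0)..t, |δ s|) ≤ γ}

/-- The nonnegative part `D⁺` of the continuous uncertainty set. -/
def DsetPlus (T Γ γ : ℝ) : Set (ℝ → ℝ) :=
  Dset T Γ γ ∩ {δ | ∀ t ∈ Icc (0:ℝ) T, δ t ∈ Icc (0:ℝ) 1}

/-- The discrete uncertainty set `D_K` (with `0`-based indexing): vectors in
`[-1,1]^K` whose sum of absolute values over each backward window of `W = Γ/Δt`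
periods is at most `g = γ/Δt`. -/
def DK (K W g : ℕ) : Set (Fin K → ℝ) :=
  {δ | (∀ l, |δ l| ≤ 1) ∧ ∀ k : Fin K,
    (∑ l ∈ Finset.univ.filter
      (fun l : Fin K => (k : ℕ) + 1 - W ≤ (l : ℕ) ∧ (l : ℕ) ≤ (k : ℕ)), |δ l|) ≤ (g : ℝ)}

/-- The nonnegative part `D_K⁺` of the discrete uncertainty set. -/
def DKplus (K W g : ℕ) : Set (Fin K → ℝ) :=
  DK K W g ∩ {δ | ∀ l, 0 ≤ δ l}

/-- The lifting operator `L` mapping a vector to the piecewise constant function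
with value `v k` on `[kΔt, (k+1)Δt)` (0-based), and `v (K-1)` at `t = KΔt`. -/
def lift (Δt : ℝ) {K : ℕ} (v : Fin K → ℝ) : ℝ → ℝ := fun t =>
  if h : min (⌊t / Δt⌋.toNat) (K - 1) < K then v ⟨min (⌊t / Δt⌋.toNat) (K - 1), h⟩ else 0

/-- The averaging operator `L†` mapping a function to its vector of averages
over the trading intervals. -/
def avg (Δt : ℝ) (K : ℕ) (w : ℝ → ℝ) : Fin K → ℝ := fun k =>
  (1 / Δt) * ∫ s in (((k : ℕ) : ℝ) * Δt)..((((k : ℕ) : ℝ) + 1) * Δt), w s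

/-- The integrand of the continuous-time state-of-charge. -/
def socIntegrand (ηp ηm : ℝ) (xb xr δ d : ℝ → ℝ) (s : ℝ) : ℝ :=
  ηp * max (xb s + δ s * xr s) 0 - (1 / ηm) * max (-(xb s + δ s * xr s)) 0 - d s

/-- The continuous-time state-of-charge `y(x^b, x^r, δ, y₀, t)`. -/
def soc (ηp ηm : ℝ) (xb xr δ d : ℝ → ℝ) (y0 t : ℝ) : ℝ :=
  y0 + ∫ s in (0:ℝ)..t, socIntegrand ηp ηm xb xr δ d s

/-- The discrete-time state-of-charge `y_k(𝐱^b, 𝐱^r, 𝛅, y₀)` (0-based indexing: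
the sum extends over the first `k` components). -/
def ysoc (Δt ηp ηm : ℝ) {K : ℕ} (xb xr δ d : Fin K → ℝ) (y0 : ℝ) (k : ℕ) : ℝ :=
  y0 + Δt * ∑ l ∈ Finset.univ.filter (fun l : Fin K => (l : ℕ) < k),
    (ηp * max (xb l + δ l * xr l) 0 - (1 / ηm) * max (-(xb l + δ l * xr l)) 0 - d l)

/-- Feasibility of `(𝐱^b,𝐱^r,𝐦,z)` in the linear robust problem (R'_K). -/
def RprimeFeasible (Δt ηp ηm : ℝ) {K : ℕ} (W g Wh gh : ℕ) (d ybarp ybarm : Fin K → ℝ)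
    (ylo yhi yl0 yu0 ylh yuh ystar : ℝ)
    (p : (Fin K → ℝ) × (Fin K → ℝ)) (m : Fin K → ℝ) (z : ℝ) : Prop :=
  (∀ j : Fin K, p.2 j + p.1 j ≤ ybarp j ∧ p.2 j - p.1 j ≤ ybarm j) ∧
  (∀ j : Fin K, ηp * p.2 j ≤ m j ∧ (1 / ηm) * p.2 j - (1 / ηm - ηp) * p.1 j ≤ m j) ∧
  (∀ δ ∈ DKplus K W g, ∀ k ≤ K,
    yu0 + Δt * (∑ l ∈ Finset.univ.filter (fun l : Fin K => (l : ℕ) < k),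
      (ηp * (p.1 l + δ l * p.2 l) - d l)) ≤ yhi) ∧
  (∀ δ ∈ DKplus K W g, ∀ k ≤ K,
    ylo ≤ yl0 + Δt * (∑ l ∈ Finset.univ.filter (fun l : Fin K => (l : ℕ) < k),
      (ηp * p.1 l - m l * δ l - d l))) ∧
  (∀ δ ∈ DKplus K Wh gh,
    yuh - z + Δt * (∑ j, (ηp * (p.1 j + δ j * p.2 j) - d j)) ≤ ystar) ∧
  (∀ δ ∈ DKplus K Wh gh,
    ystar ≤ ylh + z + Δt * (∑ j, (ηp * p.1 j - m j * δ j - d j)))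

open Filter Topology Finset

theorem IsCompact.exists_mem_extremePoints_isMaxOn {E : Type*} [AddCommGroup E] [Module ℝ E]
    [TopologicalSpace E] [T2Space E] [IsTopologicalAddGroup E] [ContinuousSMul ℝ E]
    [LocallyConvexSpace ℝ E] {s : Set E} (hs : IsCompact s) (hne : s.Nonempty)
    (φ : StrongDual ℝ E) : ∃ x ∈ s.extremePoints ℝ, IsMaxOn φ s x := by
  obtain ⟨z, hzs, hz⟩ := hs.exists_isMaxOn hne φ.continuous.continuousOn
  have hexp : IsExposed ℝ s {y ∈ s | ∀ w ∈ s, φ w ≤ φ y} := fun _ => ⟨φ, rfl⟩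
  obtain ⟨x, hx⟩ := (hexp.isCompact hs).extremePoints_nonempty ⟨z, hzs, hz⟩
  exact ⟨x, hexp.isExtreme.extremePoints_subset_extremePoints hx, hx.1.2⟩

lemma Real.sSup_setOf_mul {α β : Type*} {c : ℝ} (hc : 0 ≤ c) (F : α → β → ℝ)
    (A : Set α) (B : Set β) :
    sSup {w | ∃ a ∈ A, ∃ b ∈ B, w = c * F a b} = c * sSup {w | ∃ a ∈ A, ∃ b ∈ B, w = F a b} := by
  rw [← smul_eq_mul, ← Real.sSup_smul_of_nonneg hc]
  congr 1
  ext w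
  simp only [Set.mem_smul_set, smul_eq_mul]
  constructor
  · rintro ⟨a, ha, b, hb, rfl⟩; exact ⟨_, ⟨a, ha, b, hb, rfl⟩, rfl⟩
  · rintro ⟨_, ⟨a, ha, b, hb, rfl⟩, rfl⟩; exact ⟨a, ha, b, hb, rfl⟩

section PrefixSum

variable {K : ℕ}

def prefixSum (v : Fin K → ℝ) (n : ℕ) : ℝ := ∑ l ∈ univ.filter (fun l : Fin K => (l : ℕ) < n), v l

@[simp] lemma prefixSum_zero (v : Fin K → ℝ) : prefixSum v 0 = 0 := by simp [prefixSum]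

lemma prefixSum_succ (v : Fin K → ℝ) {n : ℕ} (hn : n < K) :
    prefixSum v (n + 1) = prefixSum v n + v ⟨n, hn⟩ := by
  rw [prefixSum, prefixSum, sum_filter, sum_filter, ← Fintype.sum_ite_eq' ⟨n, hn⟩ v,
    ← sum_add_distrib]
  refine sum_congr rfl fun l _ => ?_
  by_cases h : (l : ℕ) = n
  · simp [Fin.ext_iff, h]
  · simp only [Fin.ext_iff, h, if_false, add_zero]
    exact if_congr (by omega) rfl rfl

lemma sum_window_eq_prefixSum_sub (v : Fin K → ℝ) (k : Fin K) (W : ℕ) :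
    ∑ l ∈ univ.filter (fun l : Fin K => (k : ℕ) + 1 - W ≤ (l : ℕ) ∧ (l : ℕ) ≤ (k : ℕ)), v l
      = prefixSum v (k + 1) - prefixSum v (k + 1 - W) := by
  rw [prefixSum, prefixSum, sum_filter, sum_filter, sum_filter, ← sum_sub_distrib]
  refine sum_congr rfl fun l _ => ?_
  split_ifs <;> first | omega | ring

lemma prefixSum_sub_telescope (f : ℕ → ℝ) {n : ℕ} (hn : n ≤ K) :
    prefixSum (fun l : Fin K => f (l + 1) - f l) n = f n - f 0 := by
  induction n with
  | zero => simp
  | succ n ih => rw [prefixSum_succ _ (by omega), ih (by omega)]; ring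

end PrefixSum

section Uncertainty

variable {K W g : ℕ}

lemma mem_DKplus_iff {δ : Fin K → ℝ} : δ ∈ DKplus K W g ↔ (∀ l, δ l ∈ Icc (0 : ℝ) 1) ∧
    ∀ k : Fin K, ∑ l ∈ univ.filter
      (fun l : Fin K => (k : ℕ) + 1 - W ≤ (l : ℕ) ∧ (l : ℕ) ≤ (k : ℕ)), δ l ≤ g := by
  constructor
  · rintro ⟨⟨hδ, hwin⟩, hnonneg⟩
    refine ⟨fun l => ⟨hnonneg l, (abs_le.1 (hδ l)).2⟩, fun k => ?_⟩
    simpa only [abs_of_nonneg (hnonneg _)] using hwin k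
  · rintro ⟨hδ, hwin⟩
    have habs : ∀ l, |δ l| = δ l := fun l => abs_of_nonneg (hδ l).1
    refine ⟨⟨fun l => ?_, fun k => ?_⟩, fun l => (hδ l).1⟩
    · rw [habs]; linarith [(hδ l).2]
    · simpa only [habs] using hwin k

lemma isCompact_DK : IsCompact (DK K W g) := by
  refine (isCompact_Icc (a := (-1 : Fin K → ℝ)) (b := 1)).of_isClosed_subset ?_ fun δ hδ => ?_
  · simp only [DK, Set.ofPred_and, Set.ofPred_forall]
    exact (isClosed_iInter fun l => isClosed_le (by fun_prop) (by fun_prop)).inter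
      (isClosed_iInter fun k => isClosed_le (by fun_prop) (by fun_prop))
  · exact ⟨fun l => (abs_le.1 (hδ.1 l)).1, fun l => (abs_le.1 (hδ.1 l)).2⟩

lemma isCompact_DKplus : IsCompact (DKplus K W g) := by
  refine isCompact_DK.inter_right ?_
  simp only [Set.ofPred_forall]
  exact isClosed_iInter fun l => isClosed_le (by fun_prop) (by fun_prop)

lemma zero_mem_DK : (0 : Fin K → ℝ) ∈ DK K W g := ⟨fun l => by simp, fun k => by simp⟩

lemma abs_mem_DKplus {δ : Fin K → ℝ} (hδ : δ ∈ DK K W g) : (fun l => |δ l|) ∈ DKplus K W g :=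
  ⟨⟨fun l => by simpa only [abs_abs] using hδ.1 l, fun k => by simpa only [abs_abs] using hδ.2 k⟩,
    fun l => abs_nonneg _⟩

lemma posPart_mem_DKplus {δ : Fin K → ℝ} (hδ : δ ∈ DK K W g) :
    (fun l => max (δ l) 0) ∈ DKplus K W g := by
  have hle : ∀ l, |max (δ l) 0| ≤ |δ l| := fun l => by
    rw [abs_of_nonneg (le_max_right _ _)]; exact max_le (le_abs_self _) (abs_nonneg _)
  exact ⟨⟨fun l => (hle l).trans (hδ.1 l),
    fun k => (sum_le_sum fun l _ => hle l).trans (hδ.2 k)⟩, fun l => le_max_right _ _⟩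

lemma neg_mem_DK {δ : Fin K → ℝ} (hδ : δ ∈ DKplus K W g) : (fun l => -δ l) ∈ DK K W g :=
  ⟨fun l => by simpa only [abs_neg] using hδ.1.1 l, fun k => by simpa only [abs_neg] using hδ.1.2 k⟩

lemma single_mem_DK (hg : 0 < g) (j : Fin K) {t : ℝ} (ht : |t| ≤ 1) :
    Pi.single j t ∈ DK K W g := by
  have habs : ∀ l, |(Pi.single j t : Fin K → ℝ) l| = (Pi.single j |t| : Fin K → ℝ) l :=
    fun l => by by_cases h : l = j <;> simp [h]
  refine ⟨fun l => by rw [habs]; by_cases h : l = j <;> simp [h, ht], fun k => ?_⟩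
  calc _ ≤ ∑ l, |(Pi.single j t : Fin K → ℝ) l| :=
        sum_le_sum_of_subset_of_nonneg (filter_subset _ _) fun l _ _ => abs_nonneg _
    _ = |t| := by simp only [habs, Finset.sum_pi_single']; simp
    _ ≤ g := ht.trans (by exact_mod_cast hg)

end Uncertainty

section Integrality

variable {K W g : ℕ}

local notation "ℤ'" => AddSubgroup.zmultiples (1 : ℝ)

lemma eq_zero_or_eq_one_of_mem_zmultiples {x : ℝ} (hx : x ∈ ℤ') (h : x ∈ Icc (0 : ℝ) 1) :
    x = 0 ∨ x = 1 := by
  obtain ⟨n, rfl⟩ := AddSubgroup.mem_zmultiples_iff.1 hx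
  simp only [zsmul_eq_mul, mul_one, Set.mem_Icc] at h ⊢
  have : n = 0 ∨ n = 1 := by
    have h0 : (0 : ℤ) ≤ n := by exact_mod_cast h.1
    have h1 : n ≤ 1 := by exact_mod_cast h.2
    omega
  rcases this with rfl | rfl <;> simp

def prefixIntIndicator (y : Fin K → ℝ) (n : ℕ) : ℝ := if prefixSum y n ∈ ℤ' then 1 else 0

/-- Moves the fractional mass of `y` between the points where its prefix sums are integers.
Its window sums telescope to differences of `prefixIntIndicator`, which vanish on every window
whose `y`-sum is an integer, in particular on every tight window. -/
def fracDirection (y : Fin K → ℝ) (l : Fin K) : ℝ :=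
  prefixIntIndicator y (l + 1) - prefixIntIndicator y l

lemma prefixIntIndicator_eq_of_sub_mem {y : Fin K → ℝ} {a b : ℕ}
    (h : prefixSum y a - prefixSum y b ∈ ℤ') : prefixIntIndicator y a = prefixIntIndicator y b := by
  have hiff : prefixSum y a ∈ ℤ' ↔ prefixSum y b ∈ ℤ' := by
    simpa only [sub_add_cancel] using AddSubgroup.add_mem_cancel_left (y := prefixSum y b) _ h
  simp only [prefixIntIndicator, hiff]

lemma prefixSum_fracDirection (y : Fin K → ℝ) {n : ℕ} (hn : n ≤ K) :
    prefixSum (fracDirection y) n = prefixIntIndicator y n - prefixIntIndicator y 0 :=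
  prefixSum_sub_telescope _ hn

lemma fracDirection_eq_zero {y : Fin K → ℝ} {l : Fin K} (hl : y l ∈ ℤ') :
    fracDirection y l = 0 := by
  rw [fracDirection, sub_eq_zero]
  refine prefixIntIndicator_eq_of_sub_mem ?_
  rwa [prefixSum_succ y l.isLt, add_sub_cancel_left]

lemma fracDirection_ne_zero {y : Fin K → ℝ} {l : Fin K} (hl : y l ∉ ℤ') :
    fracDirection y ≠ 0 := by
  intro h
  have h0 : prefixIntIndicator y 0 = 1 := by simp [prefixIntIndicator]
  have hint : ∀ n ≤ K, prefixSum y n ∈ ℤ' := fun n hn => by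
    have := prefixSum_fracDirection y hn
    rw [h, h0, show prefixSum (0 : Fin K → ℝ) n = 0 by simp [prefixSum], prefixIntIndicator] at this
    by_contra hmem
    rw [if_neg hmem] at this
    norm_num at this
  apply hl
  have := sub_mem (hint (l + 1) l.isLt) (hint l l.isLt.le)
  rwa [prefixSum_succ y l.isLt, add_sub_cancel_left] at this

lemma eventually_add_smul_fracDirection_mem_DKplus {y : Fin K → ℝ} (hy : y ∈ DKplus K W g) :
    ∀ᶠ σ in 𝓝 (0 : ℝ), y + σ • fracDirection y ∈ DKplus K W g := by
  rw [mem_DKplus_iff] at hy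
  obtain ⟨hy01, hwin⟩ := hy
  have hlin : ∀ (a b : ℝ), Tendsto (fun σ : ℝ => a + σ * b) (𝓝 0) (𝓝 a) := fun a b => by
    have : Tendsto (fun σ : ℝ => a + σ * b) (𝓝 0) (𝓝 (a + 0 * b)) :=
      tendsto_const_nhds.add (tendsto_id.mul tendsto_const_nhds)
    simpa using this
  simp only [mem_DKplus_iff, Pi.add_apply, Pi.smul_apply, smul_eq_mul, sum_add_distrib,
    ← mul_sum, eventually_and, eventually_all]
  constructor
  · intro l
    by_cases hl : y l ∈ ℤ'
    · simp [fracDirection_eq_zero hl, hy01 l]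
    · have h0 : y l ≠ 0 := fun h => hl (h ▸ zero_mem _)
      have h1 : y l ≠ 1 := fun h => hl (h ▸ AddSubgroup.mem_zmultiples (1 : ℝ))
      have hIoo : y l ∈ Ioo (0 : ℝ) 1 :=
        ⟨(hy01 l).1.lt_of_ne' h0, (hy01 l).2.lt_of_ne h1⟩
      exact ((hlin _ _).eventually (Ioo_mem_nhds hIoo.1 hIoo.2)).mono
        fun _ h => Ioo_subset_Icc_self h
  · intro k
    rcases (hwin k).lt_or_eq with hlt | htight
    · exact ((hlin _ _).eventually (Iio_mem_nhds hlt)).mono fun _ h => h.le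
    · have hint : prefixSum y (k + 1) - prefixSum y (k + 1 - W) ∈ ℤ' := by
        rw [← sum_window_eq_prefixSum_sub, htight]
        exact ⟨g, by simp⟩
      have hflat : ∑ l ∈ univ.filter (fun l : Fin K => (k : ℕ) + 1 - W ≤ (l : ℕ) ∧
          (l : ℕ) ≤ (k : ℕ)), fracDirection y l = 0 := by
        rw [sum_window_eq_prefixSum_sub, prefixSum_fracDirection y k.isLt,
          prefixSum_fracDirection y (by omega), prefixIntIndicator_eq_of_sub_mem hint, sub_self]
      exact Eventually.of_forall fun σ => by rw [hflat, mul_zero, add_zero, htight]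

lemma eq_zero_or_eq_one_of_mem_extremePoints_DKplus {y : Fin K → ℝ}
    (hy : y ∈ (DKplus K W g).extremePoints ℝ) (l : Fin K) : y l = 0 ∨ y l = 1 := by
  refine eq_zero_or_eq_one_of_mem_zmultiples ?_ ((mem_DKplus_iff.1 hy.1).1 l)
  by_contra hl
  obtain ⟨ε, hε, hball⟩ := Metric.eventually_nhds_iff.1
    (eventually_add_smul_fracDirection_mem_DKplus hy.1)
  have hdist : ∀ σ : ℝ, |σ| = ε / 2 → dist σ 0 < ε := fun σ hσ => by
    rw [Real.dist_eq, sub_zero, hσ]; linarith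
  have hplus := hball (hdist (ε / 2) (abs_of_pos (by linarith)))
  have hminus := hball (hdist (-(ε / 2)) (by rw [abs_neg, abs_of_pos (by linarith)]))
  have hseg : y ∈ openSegment ℝ (y + (ε / 2) • fracDirection y)
      (y + (-(ε / 2)) • fracDirection y) :=
    ⟨1 / 2, 1 / 2, by norm_num, by norm_num, by norm_num, by module⟩
  have hfix := hy.2 hplus hminus hseg
  rw [add_eq_left, smul_eq_zero] at hfix
  exact hfix.elim (fun h => by linarith) (fracDirection_ne_zero hl)

lemma exists_zero_one_mem_DKplus_sum_le (s : Finset (Fin K)) (c : Fin K → ℝ) {δ : Fin K → ℝ}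
    (hδ : δ ∈ DKplus K W g) :
    ∃ γ ∈ DKplus K W g, (∀ l, γ l = 0 ∨ γ l = 1) ∧ ∑ l ∈ s, c l * δ l ≤ ∑ l ∈ s, c l * γ l := by
  let φ : StrongDual ℝ (Fin K → ℝ) := ∑ l ∈ s, c l • ContinuousLinearMap.proj l
  have hφ : ∀ x, φ x = ∑ l ∈ s, c l * x l := fun x => by simp [φ]
  obtain ⟨γ, hγ, hmax⟩ := isCompact_DKplus.exists_mem_extremePoints_isMaxOn ⟨δ, hδ⟩ φ
  refine ⟨γ, hγ.1, eq_zero_or_eq_one_of_mem_extremePoints_DKplus hγ, ?_⟩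
  rw [← hφ, ← hφ]
  exact hmax hδ

end Integrality

section Charge

variable {ηp ηm b r : ℝ}

def netCharge (ηp ηm u : ℝ) : ℝ := ηp * max u 0 - (1 / ηm) * max (-u) 0

/-- The least `m` allowed by the constraints of (R'_K). -/
def mStar (ηp ηm b r : ℝ) : ℝ := max (ηp * r) ((1 / ηm) * r - (1 / ηm - ηp) * b)

lemma netCharge_of_nonneg {u : ℝ} (hu : 0 ≤ u) : netCharge ηp ηm u = ηp * u := by
  simp [netCharge, hu]

lemma netCharge_of_nonpos {u : ℝ} (hu : u ≤ 0) : netCharge ηp ηm u = (1 / ηm) * u := by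
  simp [netCharge, hu]

lemma netCharge_le (hηp : 0 ≤ ηp) (hηm : 0 ≤ ηm) (hb : 0 ≤ b) (hr : 0 ≤ r) (t : ℝ) :
    netCharge ηp ηm (b + t * r) ≤ ηp * (b + max t 0 * r) := by
  have hcharge : max (b + t * r) 0 ≤ b + max t 0 * r :=
    max_le (by gcongr; exact le_max_left _ _) (by positivity)
  have hdischarge : 0 ≤ (1 / ηm) * max (-(b + t * r)) 0 := by positivity
  unfold netCharge
  nlinarith [mul_le_mul_of_nonneg_left hcharge hηp]

lemma le_netCharge (hηp : 0 ≤ ηp) (hη : ηp ≤ 1 / ηm) (hb : 0 ≤ b) (hr : 0 ≤ r) {m t : ℝ}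
    (hm₁ : ηp * r ≤ m) (hm₂ : (1 / ηm) * r - (1 / ηm - ηp) * b ≤ m) (ht : |t| ≤ 1) :
    ηp * b - m * |t| ≤ netCharge ηp ηm (b + t * r) := by
  rcases le_total 0 t with ht0 | ht0
  · rw [netCharge_of_nonneg (by positivity), abs_of_nonneg ht0]
    nlinarith [mul_nonneg hηp hr]
  rw [abs_of_nonpos ht0]
  have ht1 : -1 ≤ t := (abs_le.1 ht).1
  rcases le_total 0 (b + t * r) with hu | hu
  · rw [netCharge_of_nonneg hu]
    nlinarith
  · rw [netCharge_of_nonpos hu]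
    nlinarith [mul_nonneg (mul_nonneg (sub_nonneg.2 hη) hb) (neg_le_iff_add_nonneg.1 ht1)]

lemma netCharge_neg_eq (hη : ηp ≤ 1 / ηm) (hb : 0 ≤ b) {γ : ℝ} (hγ : γ = 0 ∨ γ = 1) :
    netCharge ηp ηm (b + -γ * r) = ηp * b - mStar ηp ηm b r * γ := by
  rcases hγ with rfl | rfl
  · simp [netCharge_of_nonneg hb]
  rcases le_total r b with hrb | hbr
  · rw [netCharge_of_nonneg (by linarith), mStar, max_eq_left (by nlinarith)]
    ring
  · rw [netCharge_of_nonpos (by linarith), mStar, max_eq_right (by nlinarith)]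
    ring

end Charge

def socDeviations (Δt ηp ηm : ℝ) {K : ℕ} (W g : ℕ) (xb xr d : Fin K → ℝ) (ylh yuh ystar : ℝ) :
    Set ℝ :=
  {w | ∃ δ ∈ DK K W g, ∃ y0 ∈ Icc ylh yuh, w = |ysoc Δt ηp ηm xb xr δ d y0 K - ystar|}

section StateOfCharge

variable {K : ℕ} {Δt ηp ηm : ℝ} {xb xr d δ : Fin K → ℝ} {y0 y0' : ℝ}

lemma ysoc_eq_sum_netCharge (k : ℕ) : ysoc Δt ηp ηm xb xr δ d y0 k =
    y0 + Δt * ∑ l ∈ univ.filter (fun l : Fin K => (l : ℕ) < k),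
      (netCharge ηp ηm (xb l + δ l * xr l) - d l) := rfl

lemma ysoc_eq_of_nonneg (hxb : ∀ l, 0 ≤ xb l) (hxr : ∀ l, 0 ≤ xr l) (hδ : ∀ l, 0 ≤ δ l)
    (k : ℕ) : ysoc Δt ηp ηm xb xr δ d y0 k =
      y0 + Δt * ∑ l ∈ univ.filter (fun l : Fin K => (l : ℕ) < k),
        (ηp * (xb l + δ l * xr l) - d l) := by
  rw [ysoc_eq_sum_netCharge]
  congr 2
  exact sum_congr rfl fun l _ => by
    rw [netCharge_of_nonneg (add_nonneg (hxb l) (mul_nonneg (hδ l) (hxr l)))]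

lemma ysoc_le (hΔt : 0 ≤ Δt) (hηp : 0 ≤ ηp) (hηm : 0 ≤ ηm)
    (hxb : ∀ l, 0 ≤ xb l) (hxr : ∀ l, 0 ≤ xr l) (hy0 : y0 ≤ y0') (k : ℕ) :
    ysoc Δt ηp ηm xb xr δ d y0 k ≤
      y0' + Δt * ∑ l ∈ univ.filter (fun l : Fin K => (l : ℕ) < k),
        (ηp * (xb l + max (δ l) 0 * xr l) - d l) := by
  rw [ysoc_eq_sum_netCharge]
  gcongr with l
  exact netCharge_le hηp hηm (hxb l) (hxr l) (δ l)

lemma le_ysoc (hΔt : 0 ≤ Δt) (hηp : 0 ≤ ηp) (hη : ηp ≤ 1 / ηm)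
    (hxb : ∀ l, 0 ≤ xb l) (hxr : ∀ l, 0 ≤ xr l) {m : Fin K → ℝ}
    (hm : ∀ l, ηp * xr l ≤ m l ∧ (1 / ηm) * xr l - (1 / ηm - ηp) * xb l ≤ m l)
    (hδ : ∀ l, |δ l| ≤ 1) (hy0 : y0' ≤ y0) (k : ℕ) :
    y0' + Δt * ∑ l ∈ univ.filter (fun l : Fin K => (l : ℕ) < k),
        (ηp * xb l - m l * |δ l| - d l) ≤ ysoc Δt ηp ηm xb xr δ d y0 k := by
  rw [ysoc_eq_sum_netCharge]
  gcongr with l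
  exact le_netCharge hηp hη (hxb l) (hxr l) (hm l).1 (hm l).2 (hδ l)

/-- Take `δ' = -γ` for a `0/1` maximiser `γ` of `∑ mStar * γ` over `D_K⁺`: at such points the
charge is exactly linear in `γ` (`netCharge_neg_eq`). -/
lemma exists_mem_DK_ysoc_le {W g : ℕ} (hΔt : 0 ≤ Δt) (hη : ηp ≤ 1 / ηm)
    (hxb : ∀ l, 0 ≤ xb l) (hδ : δ ∈ DKplus K W g) (y0 : ℝ) (k : ℕ) :
    ∃ δ' ∈ DK K W g, ysoc Δt ηp ηm xb xr δ' d y0 k ≤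
      y0 + Δt * ∑ l ∈ univ.filter (fun l : Fin K => (l : ℕ) < k),
        (ηp * xb l - mStar ηp ηm (xb l) (xr l) * δ l - d l) := by
  obtain ⟨γ, hγ, hγ01, hle⟩ := exists_zero_one_mem_DKplus_sum_le
    (univ.filter (fun l : Fin K => (l : ℕ) < k)) (fun l => mStar ηp ηm (xb l) (xr l)) hδ
  refine ⟨fun l => -γ l, neg_mem_DK hγ, ?_⟩
  rw [ysoc_eq_sum_netCharge]
  simp_rw [netCharge_neg_eq hη (hxb _) (hγ01 _)]
  simp only [sum_sub_distrib]
  gcongr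

lemma bddAbove_socDeviations (W g : ℕ) (ylh yuh ystar : ℝ) :
    BddAbove (socDeviations Δt ηp ηm W g xb xr d ylh yuh ystar) := by
  have hcont : Continuous fun q : (Fin K → ℝ) × ℝ =>
      |ysoc Δt ηp ηm xb xr q.1 d q.2 K - ystar| := by
    unfold ysoc; fun_prop
  have hcpt : IsCompact (DK K W g ×ˢ Icc ylh yuh) := isCompact_DK.prod isCompact_Icc
  refine (hcpt.bddAbove_image hcont.continuousOn).mono ?_
  rintro w ⟨δ, hδ, y0, hy0, rfl⟩
  exact ⟨(δ, y0), ⟨hδ, hy0⟩, rfl⟩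

end StateOfCharge

lemma filter_val_lt_eq_univ {K : ℕ} :
    Finset.univ.filter (fun l : Fin K => (l : ℕ) < K) = Finset.univ :=
  filter_true_of_mem fun l _ => l.isLt

section Reformulation

variable {K W g Wh gh : ℕ} {Δt ηp ηm : ℝ} {d ybarp ybarm : Fin K → ℝ}
  {ylo yhi yl0 yu0 ylh yuh ystar : ℝ} {xb xr : Fin K → ℝ}

lemma charger_linear_of_robust (hg : 0 < g)
    (h : ∀ δ ∈ DK K W g, ∀ j, max (xb j + δ j * xr j) 0 ≤ ybarp j ∧
      max (-(xb j + δ j * xr j)) 0 ≤ ybarm j) (j : Fin K) :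
    xr j + xb j ≤ ybarp j ∧ xr j - xb j ≤ ybarm j := by
  have hup := (h _ (single_mem_DK hg j (t := 1) (by norm_num)) j).1
  have hdown := (h _ (single_mem_DK hg j (t := -1) (by norm_num)) j).2
  simp only [Pi.single_eq_same] at hup hdown
  constructor <;> linarith [le_max_left (xb j + 1 * xr j) 0, le_max_left (-(xb j + -1 * xr j)) 0]

lemma charger_robust_of_linear (hybarp : ∀ l, 0 ≤ ybarp l) (hybarm : ∀ l, 0 ≤ ybarm l)
    (hxr : ∀ l, 0 ≤ xr l) (h : ∀ j, xr j + xb j ≤ ybarp j ∧ xr j - xb j ≤ ybarm j)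
    {δ : Fin K → ℝ} (hδ : δ ∈ DK K W g) (j : Fin K) :
    max (xb j + δ j * xr j) 0 ≤ ybarp j ∧ max (-(xb j + δ j * xr j)) 0 ≤ ybarm j := by
  obtain ⟨hδ₁, hδ₂⟩ := abs_le.1 (hδ.1 j)
  have h₁ := mul_le_mul_of_nonneg_right hδ₂ (hxr j)
  have h₂ := mul_le_mul_of_nonneg_right hδ₁ (hxr j)
  exact ⟨max_le (by linarith [h j]) (hybarp j), max_le (by linarith [h j]) (hybarm j)⟩

theorem rprimeFeasible_of_robust (hΔt : 0 ≤ Δt) (hg : 0 < g)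
    (hη : ηp ≤ 1 / ηm) (hy0 : yl0 ≤ yu0) (hyh : ylh ≤ yuh)
    (hxb : ∀ l, 0 ≤ xb l) (hxr : ∀ l, 0 ≤ xr l)
    (hcharger : ∀ δ ∈ DK K W g, ∀ j, max (xb j + δ j * xr j) 0 ≤ ybarp j ∧
      max (-(xb j + δ j * xr j)) 0 ≤ ybarm j)
    (hsoc : ∀ δ ∈ DK K W g, ∀ k ≤ K, ∀ y0 ∈ Icc yl0 yu0,
      ylo ≤ ysoc Δt ηp ηm xb xr δ d y0 k ∧ ysoc Δt ηp ηm xb xr δ d y0 k ≤ yhi) :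
    RprimeFeasible Δt ηp ηm W g Wh gh d ybarp ybarm ylo yhi yl0 yu0 ylh yuh ystar (xb, xr)
      (fun l => mStar ηp ηm (xb l) (xr l))
      (sSup (socDeviations Δt ηp ηm Wh gh xb xr d ylh yuh ystar)) := by
  have hbdd := bddAbove_socDeviations (Δt := Δt) (ηp := ηp) (ηm := ηm) (xb := xb) (xr := xr)
    (d := d) Wh gh ylh yuh ystar
  refine ⟨charger_linear_of_robust hg hcharger, fun j => ⟨le_max_left _ _, le_max_right _ _⟩,
    fun δ hδ k hk => ?_, fun δ hδ k hk => ?_, fun δ hδ => ?_, fun δ hδ => ?_⟩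
  · rw [← ysoc_eq_of_nonneg hxb hxr hδ.2]
    exact (hsoc δ hδ.1 k hk yu0 ⟨hy0, le_rfl⟩).2
  · obtain ⟨δ', hδ', hle⟩ := exists_mem_DK_ysoc_le (xr := xr) (d := d) hΔt hη hxb hδ yl0 k
    exact (hsoc δ' hδ' k hk yl0 ⟨le_rfl, hy0⟩).1.trans hle
  · dsimp only
    have hdev := le_csSup hbdd ⟨δ, hδ.1, yuh, ⟨hyh, le_rfl⟩, rfl⟩
    have hval := ysoc_eq_of_nonneg (Δt := Δt) (ηp := ηp) (ηm := ηm) (d := d) (y0 := yuh)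
      hxb hxr hδ.2 K
    rw [filter_val_lt_eq_univ] at hval
    linarith [le_abs_self (ysoc Δt ηp ηm xb xr δ d yuh K - ystar)]
  · dsimp only
    obtain ⟨δ', hδ', hle⟩ := exists_mem_DK_ysoc_le (xr := xr) (d := d) hΔt hη hxb hδ ylh K
    have hdev := le_csSup hbdd ⟨δ', hδ', ylh, ⟨le_rfl, hyh⟩, rfl⟩
    rw [filter_val_lt_eq_univ] at hle
    linarith [neg_abs_le (ysoc Δt ηp ηm xb xr δ' d ylh K - ystar)]

theorem robust_of_rprimeFeasible (hΔt : 0 ≤ Δt) (hηp : 0 ≤ ηp) (hηm : 0 ≤ ηm)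
    (hη : ηp ≤ 1 / ηm) (hybarp : ∀ l, 0 ≤ ybarp l) (hybarm : ∀ l, 0 ≤ ybarm l)
    (hxb : ∀ l, 0 ≤ xb l) (hxr : ∀ l, 0 ≤ xr l) {m : Fin K → ℝ} {z : ℝ}
    (h : RprimeFeasible Δt ηp ηm W g Wh gh d ybarp ybarm ylo yhi yl0 yu0 ylh yuh ystar (xb, xr)
      m z) :
    (∀ δ ∈ DK K W g, ∀ j, max (xb j + δ j * xr j) 0 ≤ ybarp j ∧
      max (-(xb j + δ j * xr j)) 0 ≤ ybarm j) ∧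
    (∀ δ ∈ DK K W g, ∀ k ≤ K, ∀ y0 ∈ Icc yl0 yu0,
      ylo ≤ ysoc Δt ηp ηm xb xr δ d y0 k ∧ ysoc Δt ηp ηm xb xr δ d y0 k ≤ yhi) ∧
    ∀ w ∈ socDeviations Δt ηp ηm Wh gh xb xr d ylh yuh ystar, w ≤ z := by
  obtain ⟨hcharger, hm, hsocUp, hsocLow, htargetUp, htargetLow⟩ := h
  refine ⟨fun δ hδ => charger_robust_of_linear hybarp hybarm hxr hcharger hδ,
    fun δ hδ k hk y0 hy0 => ⟨?_, ?_⟩, ?_⟩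
  · exact (hsocLow _ (abs_mem_DKplus hδ) k hk).trans
      (le_ysoc hΔt hηp hη hxb hxr hm hδ.1 hy0.1 k)
  · exact (ysoc_le hΔt hηp hηm hxb hxr hy0.2 k).trans (hsocUp _ (posPart_mem_DKplus hδ) k hk)
  · rintro w ⟨δ, hδ, y0, hy0, rfl⟩
    have hlow := le_ysoc (d := d) hΔt hηp hη hxb hxr hm hδ.1 hy0.1 K
    have hup := ysoc_le (d := d) hΔt hηp hηm hxb hxr (δ := δ) hy0.2 K
    rw [filter_val_lt_eq_univ] at hlow hup
    rw [abs_le]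
    constructor
    · linarith [htargetLow _ (abs_mem_DKplus hδ)]
    · linarith [htargetUp _ (posPart_mem_DKplus hδ)]

end Reformulation

theorem stmt_18_general (Δt : ℝ) (K W g Wh gh : ℕ) (hΔt : 0 < Δt)
    (hg : 0 < g)
    (ηp ηm : ℝ) (hηp : ηp ∈ Ioc (0:ℝ) 1) (hηm : ηm ∈ Ioc (0:ℝ) 1)
    (d : Fin K → ℝ) (ylo yhi : ℝ)
    (yl0 yu0 : ℝ) (hy0 : yl0 ≤ yu0) (ylh yuh : ℝ) (hyh : ylh ≤ yuh)
    (ybarp ybarm : Fin K → ℝ) (hybarp : ∀ l, 0 ≤ ybarp l) (hybarm : ∀ l, 0 ≤ ybarm l)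
    (ystar pstar : ℝ) (hpstar : 0 ≤ pstar)
    (XK : Set ((Fin K → ℝ) × (Fin K → ℝ)))
    (hXK : ∀ p ∈ XK, (∀ l, 0 ≤ p.1 l) ∧ (∀ l, 0 ≤ p.2 l))
    (cK : (Fin K → ℝ) × (Fin K → ℝ) → ℝ) :
    sInf {v : ℝ | ∃ p ∈ XK,
        (∀ δ ∈ DK K W g, ∀ j : Fin K,
          max (p.1 j + δ j * p.2 j) 0 ≤ ybarp j ∧
          max (-(p.1 j + δ j * p.2 j)) 0 ≤ ybarm j) ∧
        (∀ δ ∈ DK K W g, ∀ k ≤ K, ∀ y0 ∈ Icc yl0 yu0,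
          ylo ≤ ysoc Δt ηp ηm p.1 p.2 δ d y0 k ∧
          ysoc Δt ηp ηm p.1 p.2 δ d y0 k ≤ yhi) ∧
        v = cK p + sSup {w : ℝ | ∃ δ ∈ DK K Wh gh, ∃ y0 ∈ Icc ylh yuh,
          w = pstar * |ysoc Δt ηp ηm p.1 p.2 δ d y0 K - ystar|}} =
      sInf {v : ℝ | ∃ p ∈ XK, ∃ m : Fin K → ℝ, ∃ z : ℝ,
        RprimeFeasible Δt ηp ηm W g Wh gh d ybarp ybarm
          ylo yhi yl0 yu0 ylh yuh ystar p m z ∧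
        v = cK p + pstar * z} := by
  obtain ⟨hηp0, hηp1⟩ := hηp
  obtain ⟨hηm0, hηm1⟩ := hηm
  have hη : ηp ≤ 1 / ηm := hηp1.trans (one_le_one_div hηm0 hηm1)
  have hsSup : ∀ p : (Fin K → ℝ) × (Fin K → ℝ),
      sSup {w : ℝ | ∃ δ ∈ DK K Wh gh, ∃ y0 ∈ Icc ylh yuh,
        w = pstar * |ysoc Δt ηp ηm p.1 p.2 δ d y0 K - ystar|} =
      pstar * sSup (socDeviations Δt ηp ηm Wh gh p.1 p.2 d ylh yuh ystar) := fun p =>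
    Real.sSup_setOf_mul hpstar (fun δ y0 => |ysoc Δt ηp ηm p.1 p.2 δ d y0 K - ystar|) _ _
  simp_rw [hsSup]
  refine csInf_eq_csInf_of_forall_exists_le ?_ ?_
  · rintro v ⟨p, hp, hcharger, hsoc, rfl⟩
    obtain ⟨hxb, hxr⟩ := hXK p hp
    exact ⟨_, ⟨p, hp, _, _,
      rprimeFeasible_of_robust hΔt.le hg hη hy0 hyh hxb hxr hcharger hsoc, rfl⟩, le_rfl⟩
  · rintro v ⟨p, hp, m, z, hfeas, rfl⟩
    obtain ⟨hxb, hxr⟩ := hXK p hp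
    obtain ⟨hcharger, hsoc, hdev⟩ :=
      robust_of_rprimeFeasible hΔt.le hηp0.le hηm0.le hη hybarp hybarm hxb hxr hfeas
    refine ⟨_, ⟨p, hp, hcharger, hsoc, rfl⟩, ?_⟩
    gcongr
    exact csSup_le ⟨_, 0, zero_mem_DK, ylh, ⟨le_rfl, hyh⟩, rfl⟩ hdev

/-- Theorem 2, lossless linearization: the non-convex robust
problem (R_K) and the linear robust problem (R'_K) have the same optimal value. -/
theorem stmt_18 (Δt : ℝ) (K W g Wh gh : ℕ) (hΔt : 0 < Δt) (hK : 0 < K)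
    (hg : 0 < g) (hgW : g ≤ W) (hWK : W ≤ K)
    (hgh : 0 < gh) (hghWh : gh ≤ Wh) (hWhK : Wh ≤ K)
    (ηp ηm : ℝ) (hηp : ηp ∈ Ioc (0:ℝ) 1) (hηm : ηm ∈ Ioc (0:ℝ) 1)
    (d : Fin K → ℝ) (ylo yhi : ℝ) (hy : ylo ≤ yhi)
    (yl0 yu0 : ℝ) (hy0 : yl0 ≤ yu0) (ylh yuh : ℝ) (hyh : ylh ≤ yuh)
    (ybarp ybarm : Fin K → ℝ) (hybarp : ∀ l, 0 ≤ ybarp l) (hybarm : ∀ l, 0 ≤ ybarm l)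
    (ystar pstar : ℝ) (hpstar : 0 ≤ pstar)
    (XK : Set ((Fin K → ℝ) × (Fin K → ℝ)))
    (hXK : ∀ p ∈ XK, (∀ l, 0 ≤ p.1 l) ∧ (∀ l, 0 ≤ p.2 l))
    (cK : (Fin K → ℝ) × (Fin K → ℝ) → ℝ) (hcK : IsLinearMap ℝ cK) :
    sInf {v : ℝ | ∃ p ∈ XK,
        (∀ δ ∈ DK K W g, ∀ j : Fin K,
          max (p.1 j + δ j * p.2 j) 0 ≤ ybarp j ∧
          max (-(p.1 j + δ j * p.2 j)) 0 ≤ ybarm j) ∧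
        (∀ δ ∈ DK K W g, ∀ k ≤ K, ∀ y0 ∈ Icc yl0 yu0,
          ylo ≤ ysoc Δt ηp ηm p.1 p.2 δ d y0 k ∧
          ysoc Δt ηp ηm p.1 p.2 δ d y0 k ≤ yhi) ∧
        v = cK p + sSup {w : ℝ | ∃ δ ∈ DK K Wh gh, ∃ y0 ∈ Icc ylh yuh,
          w = pstar * |ysoc Δt ηp ηm p.1 p.2 δ d y0 K - ystar|}} =
      sInf {v : ℝ | ∃ p ∈ XK, ∃ m : Fin K → ℝ, ∃ z : ℝ,
        RprimeFeasible Δt ηp ηm W g Wh gh d ybarp ybarm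
          ylo yhi yl0 yu0 ylh yuh ystar p m z ∧
        v = cK p + pstar * z} :=
  stmt_18_general Δt K W g Wh gh hΔt hg ηp ηm hηp hηm d ylo yhi yl0 yu0 hy0 ylh yuh hyh ybarp ybarm
    hybarp hybarm ystar pstar hpstar XK hXK cK
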